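/- Assume σ_d > 0. Let L be an n×n diagonal real matrix with diagonal entries in {0,1}. Then ‖Y − Y·V^d·(S^d)⁻¹·(U^d)ᵀ·(I_n − L)·Y‖_F ≤ ‖Y − U^d·S^d·(V^d)ᵀ‖_F + ‖U^d·(U^d)ᵀ·L·Y‖_F. (The INMO-MF error with non-template users flagged by L exceeds the optimal rank-d error by at most ‖U^d·(U^d)ᵀ·L·Y‖_F.) -/

import Mathlib

open Matrix

noncomputable def frobNorm {n m : ℕ} (M : Matrix (Fin n) (Fin m) ℝ) : ℝ :=
  Real.sqrt (∑ i, ∑ j, (M i j) ^ 2)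

def firstCols {n p : ℕ} (d : ℕ) (h : d ≤ p) (U : Matrix (Fin n) (Fin p) ℝ) :
    Matrix (Fin n) (Fin d) ℝ :=
  fun i j => U i (Fin.castLE h j)

noncomputable def diagTrunc {p : ℕ} (d : ℕ) (h : d ≤ p) (σ : Fin p → ℝ) :
    Matrix (Fin d) (Fin d) ℝ :=
  Matrix.diagonal (fun j => σ (Fin.castLE h j))

lemma frobNorm_add_le {n m : ℕ} (A B : Matrix (Fin n) (Fin m) ℝ) :
    frobNorm (A + B) ≤ frobNorm A + frobNorm B := by
  have h := norm_add_le (E := EuclideanSpace ℝ (Fin n × Fin m))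
    (WithLp.toLp 2 (fun q : Fin n × Fin m => A q.1 q.2)) (WithLp.toLp 2 (fun q : Fin n × Fin m => B q.1 q.2))
  simpa [frobNorm, EuclideanSpace.norm_eq, Fintype.sum_prod_type,
    Real.norm_eq_abs, sq_abs, Matrix.add_apply, PiLp.add_apply, PiLp.toLp_apply] using h

/-- the p×d "embedding" matrix -/
def embd {p d : ℕ} (h : d ≤ p) : Matrix (Fin p) (Fin d) ℝ :=
  fun i j => if i = Fin.castLE h j then 1 else 0

lemma firstCols_eq_mul {n p d : ℕ} (h : d ≤ p) (U : Matrix (Fin n) (Fin p) ℝ) :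
    firstCols d h U = U * embd h := by
  ext i j
  simp [firstCols, embd, Matrix.mul_apply, Finset.sum_ite_eq', eq_comm]

lemma embd_tr_embd {p d : ℕ} (h : d ≤ p) : (embd (p := p) h)ᵀ * embd h = 1 := by
  ext i j
  simp only [Matrix.mul_apply, embd, transpose_apply, Matrix.one_apply, ite_mul, one_mul, zero_mul]
  rw [Finset.sum_eq_single (Fin.castLE h i)]
  · simp [Fin.castLE_injective h |>.eq_iff, eq_comm]
  · intro b _ hb; simp [hb]
  · simp

lemma diag_mul_embd {p d : ℕ} (h : d ≤ p) (σ : Fin p → ℝ) :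
    Matrix.diagonal σ * embd h = embd h * diagTrunc d h σ := by
  ext i j
  simp only [diagTrunc, Matrix.diagonal_mul, Matrix.mul_diagonal, embd]
  by_cases hij : i = Fin.castLE h j <;> simp [hij]


lemma embdT_mul_diag {p d : ℕ} (h : d ≤ p) (σ : Fin p → ℝ) :
    (embd (p := p) h)ᵀ * Matrix.diagonal σ = diagTrunc d h σ * (embd h)ᵀ := by
  have := congrArg Matrix.transpose (diag_mul_embd h σ)
  simp only [Matrix.transpose_mul, Matrix.diagonal_transpose] at this
  rw [this]
  congr 1
  simp [diagTrunc, Matrix.diagonal_transpose]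

/-- the INMO-MF error with non-template users flagged by the 0/1 diagonal
matrix `L` exceeds the optimal rank-`d` error by at most `‖U^d (U^d)ᵀ L Y‖_F`:
`‖Y − Y V^d (S^d)⁻¹ (U^d)ᵀ (I − L) Y‖_F ≤ ‖Y − U^d S^d (V^d)ᵀ‖_F + ‖U^d (U^d)ᵀ L Y‖_F`. -/
theorem inmo_mf_error_upper_bound
    (n m d p : ℕ) (hn : 0 < n) (hm : 0 < m) (hd : 0 < d)
    (hp : p = min n m) (hdp : d ≤ p)
    (Y : Matrix (Fin n) (Fin m) ℝ)
    (U : Matrix (Fin n) (Fin p) ℝ) (V : Matrix (Fin m) (Fin p) ℝ)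
    (σ : Fin p → ℝ)
    (hU : Uᵀ * U = 1) (hV : Vᵀ * V = 1)
    (hσmono : Antitone σ) (hσ0 : ∀ j, 0 ≤ σ j)
    (hY : Y = U * Matrix.diagonal σ * Vᵀ)
    (hσd : 0 < σ ⟨d - 1, by omega⟩)
    (L : Matrix (Fin n) (Fin n) ℝ) (l : Fin n → ℝ)
    (hL : L = Matrix.diagonal l) (hl01 : ∀ j, l j = 0 ∨ l j = 1) :
    frobNorm (Y - Y * firstCols d hdp V * (diagTrunc d hdp σ)⁻¹ * (firstCols d hdp U)ᵀ
          * (1 - L) * Y)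
      ≤ frobNorm (Y - firstCols d hdp U * diagTrunc d hdp σ * (firstCols d hdp V)ᵀ)
          + frobNorm (firstCols d hdp U * (firstCols d hdp U)ᵀ * L * Y) := by
  set E := embd (p := p) hdp with hE
  set Sd := diagTrunc d hdp σ with hSd
  set Ud := firstCols d hdp U with hUd
  set Vd := firstCols d hdp V with hVd
  have hσpos : ∀ j : Fin d, 0 < σ (Fin.castLE hdp j) := by
    intro j
    refine lt_of_lt_of_le hσd (hσmono ?_)
    exact Fin.mk_le_mk.mpr (by omega)
  have hSdinv : Sd * Sd⁻¹ = 1 := by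
    apply Matrix.mul_nonsing_inv
    rw [hSd, diagTrunc, Matrix.det_diagonal]
    exact isUnit_iff_ne_zero.mpr (ne_of_gt (Finset.prod_pos fun j _ => hσpos j))
  have hUE : Ud = U * E := firstCols_eq_mul hdp U
  have hVE : Vd = V * E := firstCols_eq_mul hdp V
  have hYVd : Y * Vd = Ud * Sd := by
    rw [hVE, hUE, hY]
    calc U * Matrix.diagonal σ * Vᵀ * (V * E)
        = U * (Matrix.diagonal σ * ((Vᵀ * V) * E)) := by simp only [Matrix.mul_assoc]
      _ = U * (Matrix.diagonal σ * E) := by rw [hV, Matrix.one_mul]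
      _ = U * (E * Sd) := by rw [hSd, diag_mul_embd]
      _ = U * E * Sd := by simp only [Matrix.mul_assoc]
  have hYVdS : Y * Vd * Sd⁻¹ = Ud := by
    rw [hYVd, Matrix.mul_assoc, hSdinv, Matrix.mul_one]
  have hproj : Ud * Udᵀ * Y = Ud * Sd * Vdᵀ := by
    rw [hUE, hVE, hY, Matrix.transpose_mul, Matrix.transpose_mul]
    calc U * E * (Eᵀ * Uᵀ) * (U * Matrix.diagonal σ * Vᵀ)
        = U * (E * (Eᵀ * ((Uᵀ * U) * (Matrix.diagonal σ * Vᵀ)))) := by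
          simp only [Matrix.mul_assoc]
      _ = U * (E * ((Eᵀ * Matrix.diagonal σ) * Vᵀ)) := by
          rw [hU, Matrix.one_mul, Matrix.mul_assoc]
      _ = U * (E * ((Sd * Eᵀ) * Vᵀ)) := by rw [embdT_mul_diag hdp σ, ← hSd, ← hE]
      _ = U * E * Sd * (Eᵀ * Vᵀ) := by simp only [Matrix.mul_assoc]
  have key : Y - Y * Vd * Sd⁻¹ * Udᵀ * (1 - L) * Y
      = (Y - Ud * Sd * Vdᵀ) + Ud * Udᵀ * L * Y := by
    rw [hYVdS]
    have h2 : Ud * Udᵀ * (1 - L) * Y = Ud * Sd * Vdᵀ - Ud * Udᵀ * L * Y := by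
      rw [Matrix.mul_sub, Matrix.mul_one, Matrix.sub_mul, hproj]
    rw [h2]; abel
  rw [key]
  exact frobNorm_add_le _ _
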